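/- arXiv:2502.11213 — 3 statements merged into one kernel-verified Lean document; each statement's English description precedes it below -/
import Mathlib

section
/- Consider the simplified Safety Stock MRP projected inventory x defined below. Then (i) for every index i with ELT < i ≤ LT the projected inventory satisfies x_i ≥ 0, and (ii) for every index i with LT < i ≤ H the projected inventory satisfies x_i ≥ SSV. In other words, the Safety Stock MRP reorder logic guarantees that projected inventory never falls below 0 during the expedited-lead-time range and never falls below the safety stock value beyond the lead time. -/
/-- The MRP order quantity `q(Δ) = max(⌈(Δ − MO)/RV⌉, 0)·RV + MO`. -/
noncomputable def mrpOrderQty (MO RV Δ : ℝ) : ℝ :=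
  ((max ⌈(Δ - MO) / RV⌉ 0 : ℤ) : ℝ) * RV + MO

/-- the simplified Safety Stock MRP projected inventory never falls
below `0` on the range `ELT < i ≤ LT`, and never falls below `SSV` on the range
`LT < i ≤ H`. -/
theorem safety_stock_mrp_inventory_bounds
    (ELT LT H : ℕ) (hELT : ELT ≤ LT) (hLT : LT ≤ H)
    (SSV MO RV : ℝ) (hMO : 0 ≤ MO) (hRV : 0 < RV)
    (SA EA c : ℕ → ℝ) (x : ℕ → ℝ)
    (h₁ : ∀ i, i < ELT → x (i + 1) = x i + SA i + EA i - c i)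
    (h₂ : ∀ i, ELT ≤ i → i < LT →
      x (i + 1) = max (x i + SA i + EA i - c i) 0)
    (h₃ : ∀ i, LT ≤ i → i < H →
      x (i + 1) =
        if SSV ≤ x i + SA i + EA i - c i then
          x i + SA i + EA i - c i
        else
          (x i + SA i + EA i - c i) +
            mrpOrderQty MO RV (SSV - (x i + SA i + EA i - c i))) :
    (∀ i, ELT < i → i ≤ LT → 0 ≤ x i) ∧
    (∀ i, LT < i → i ≤ H → SSV ≤ x i) := by
  have hq : ∀ Δ : ℝ, Δ ≤ mrpOrderQty MO RV Δ := by
    intro Δ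
    unfold mrpOrderQty
    have h1 : (Δ - MO) / RV ≤ ((max ⌈(Δ - MO) / RV⌉ 0 : ℤ) : ℝ) := by
      calc (Δ - MO) / RV ≤ (⌈(Δ - MO) / RV⌉ : ℝ) := Int.le_ceil _
        _ ≤ ((max ⌈(Δ - MO) / RV⌉ 0 : ℤ) : ℝ) := by exact_mod_cast le_max_left _ _
    have h2 : Δ - MO ≤ ((max ⌈(Δ - MO) / RV⌉ 0 : ℤ) : ℝ) * RV :=
      (div_le_iff₀ hRV).mp h1
    linarith
  constructor
  · intro i hi hle
    obtain ⟨j, rfl⟩ := Nat.exists_eq_add_of_lt hi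
    rw [h₂ (ELT + j) (Nat.le_add_right _ _) (by omega)]
    exact le_max_right _ _
  · intro i hi hle
    obtain ⟨j, rfl⟩ := Nat.exists_eq_add_of_lt hi
    rw [h₃ (LT + j) (Nat.le_add_right _ _) (by omega)]
    split
    · assumption
    · have := hq (SSV - (x (LT + j) + SA (LT + j) + EA (LT + j) - c (LT + j)))
      linarith
end

section
/- In the absence of uncertainty no safety stock buffer is needed: if the simplified Safety Stock MRP projected inventory is run with safety stock value SSV = 0, then x_i ≥ 0 for every index i with ELT < i ≤ H, and consequently the service level over the days ELT+1,…,H, defined as (#{i : ELT < i ≤ H and x_i ≥ 0})/(H − ELT), equals 1 (100%). -/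
lemma mrpOrderQty_ge (MO RV Δ : ℝ) (hMO : 0 ≤ MO) (hRV : 0 < RV) :
    Δ ≤ mrpOrderQty MO RV Δ := by
  unfold mrpOrderQty
  have h1 : (Δ - MO) / RV ≤ ((max ⌈(Δ - MO) / RV⌉ 0 : ℤ) : ℝ) := by
    calc (Δ - MO) / RV ≤ (⌈(Δ - MO) / RV⌉ : ℝ) := Int.le_ceil _
    _ ≤ _ := by exact_mod_cast le_max_left _ _
  have := (div_le_iff₀ hRV).mp h1
  linarith

/-- running the simplified Safety Stock MRP with safety stock value
`SSV = 0`, the projected inventory satisfies `x i ≥ 0` for all `ELT < i ≤ H`, and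
the service level over days `ELT+1, …, H` equals `1`. -/
theorem safety_stock_mrp_zero_ssv_full_service_level
    (ELT LT H : ℕ) (hELT : ELT ≤ LT) (hLT : LT ≤ H) (hH : ELT < H)
    (SSV MO RV : ℝ) (hSSV : SSV = 0) (hMO : 0 ≤ MO) (hRV : 0 < RV)
    (SA EA c : ℕ → ℝ) (x : ℕ → ℝ)
    (h₁ : ∀ i, i < ELT → x (i + 1) = x i + SA i + EA i - c i)
    (h₂ : ∀ i, ELT ≤ i → i < LT →
      x (i + 1) = max (x i + SA i + EA i - c i) 0)
    (h₃ : ∀ i, LT ≤ i → i < H →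
      x (i + 1) =
        if SSV ≤ x i + SA i + EA i - c i then
          x i + SA i + EA i - c i
        else
          (x i + SA i + EA i - c i) +
            mrpOrderQty MO RV (SSV - (x i + SA i + EA i - c i))) :
    (∀ i, ELT < i → i ≤ H → 0 ≤ x i) ∧
    (((Finset.Icc (ELT + 1) H).filter fun i => 0 ≤ x i).card : ℝ)
      / ((H - ELT : ℕ) : ℝ) = 1 := by
  have key : ∀ i, ELT ≤ i → i < H → 0 ≤ x (i + 1) := by
    intro i hle hlt
    by_cases hL : i < LT
    · rw [h₂ i hle hL]; exact le_max_right _ _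
    · push_neg at hL
      rw [h₃ i hL hlt]
      split_ifs with h
      · linarith [hSSV ▸ h]
      · have := mrpOrderQty_ge MO RV (SSV - (x i + SA i + EA i - c i)) hMO hRV
        linarith
  have nonneg : ∀ i, ELT < i → i ≤ H → 0 ≤ x i := by
    intro i hi hiH
    obtain ⟨j, rfl⟩ := Nat.exists_eq_add_of_lt hi
    rw [Nat.add_comm ELT j, Nat.add_assoc] at *
    exact key (j + ELT) (Nat.le_add_left _ _) (by omega)
  refine ⟨nonneg, ?_⟩
  have hfilter : (Finset.Icc (ELT + 1) H).filter (fun i => 0 ≤ x i)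
      = Finset.Icc (ELT + 1) H := by
    apply Finset.filter_true_of_mem
    intro i hi
    rw [Finset.mem_Icc] at hi
    exact nonneg i (by omega) hi.2
  rw [hfilter, Nat.card_Icc]
  have : H + 1 - (ELT + 1) = H - ELT := by omega
  rw [this]
  have hpos : (0 : ℝ) < ((H - ELT : ℕ) : ℝ) := by
    exact_mod_cast Nat.sub_pos_of_lt hH
  field_simp
end

section
/- The backward order-cancellation loop admits a closed form independent of its sequential execution: iterating the cancellation step for k = LT, LT−1, …, PTF+1 (where the surplus at step k is computed from the arrivals SA_i, i ≤ k, as currently stored) produces exactly the arrays SA'_k = SA_k − max(0, min(C_k − SSV, SA_k)) for PTF < k ≤ LT and SA'_i = SA_i for all other indices i, where C_k is the projected cumulative inventory computed from the ORIGINAL arrivals. Consequently 0 ≤ SA'_i ≤ SA_i for every index i, and the projected cumulative inventory after cancellation is at no day larger than before cancellation. -/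
/-- Projected cumulative inventory at day `k`: starting inventory plus all
standard and expedited arrivals up to day `k` minus all forecast demand up to
day `k`. -/
noncomputable def projInv (x : ℝ) (SA EA c : ℕ → ℝ) (k : ℕ) : ℝ :=
  x + ∑ i ∈ Finset.range (k + 1), (SA i + EA i - c i)

/-- One order-cancellation step at day `k`: compute the surplus
`x̃ = projInv x SA EA c k − SSV` from the currently stored arrivals; if the
surplus is positive, reduce `SA k` by `min(x̃, SA k)`, otherwise leave `SA`
unchanged.  Only the entry at day `k` is modified. -/
noncomputable def cancelStep (x SSV : ℝ) (EA c : ℕ → ℝ) (k : ℕ)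
    (SA : ℕ → ℝ) : ℕ → ℝ :=
  fun i =>
    if i = k then
      if 0 < projInv x SA EA c k - SSV then
        SA k - min (projInv x SA EA c k - SSV) (SA k)
      else SA k
    else SA i

/-- The backward order-cancellation loop: perform the cancellation step for
`k = LT, LT − 1, …, PTF + 1`. -/
noncomputable def backwardCancel (x SSV : ℝ) (EA c : ℕ → ℝ) (PTF LT : ℕ)
    (SA : ℕ → ℝ) : ℕ → ℝ :=
  (List.range (LT - PTF)).foldl (fun A j => cancelStep x SSV EA c (LT - j) A) SA

/-!
Step `k` reads only the entries `SA i` with `i ≤ k`, and the loop runs backwards, so when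
step `k` executes, every entry it reads is still the original one. Hence each step cancels
`max 0 (min (C_k - SSV) (SA k))` computed from the original arrivals (the `max` only rewrites
the `if` of the step, using `SA k ≥ 0`), which gives the closed form; the remaining claims
follow since every cancelled amount lies in `[0, SA k]`.
-/

noncomputable def cancelAmount (x SSV : ℝ) (SA EA c : ℕ → ℝ) (k : ℕ) : ℝ :=
  max 0 (min (projInv x SA EA c k - SSV) (SA k))

noncomputable def cancelClosedForm (x SSV : ℝ) (EA c : ℕ → ℝ) (PTF LT : ℕ)
    (SA : ℕ → ℝ) : ℕ → ℝ :=
  fun i => if PTF < i ∧ i ≤ LT then SA i - cancelAmount x SSV SA EA c i else SA i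

section

variable {x SSV : ℝ} {SA SA' EA c : ℕ → ℝ}

theorem projInv_congr {k : ℕ} (h : ∀ i ≤ k, SA' i = SA i) :
    projInv x SA' EA c k = projInv x SA EA c k := by
  unfold projInv
  congr 1
  refine Finset.sum_congr rfl fun i hi => ?_
  rw [h i (Nat.lt_succ_iff.mp (Finset.mem_range.mp hi))]

theorem projInv_mono (h : ∀ i, SA' i ≤ SA i) (k : ℕ) :
    projInv x SA' EA c k ≤ projInv x SA EA c k := by
  unfold projInv
  gcongr with i
  exact h i

theorem cancelAmount_nonneg (k : ℕ) : 0 ≤ cancelAmount x SSV SA EA c k :=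
  le_max_left _ _

theorem cancelAmount_le {k : ℕ} (hk : 0 ≤ SA k) : cancelAmount x SSV SA EA c k ≤ SA k :=
  max_le hk (min_le_right _ _)

theorem cancelStep_eq_update {k : ℕ} (hk : 0 ≤ SA k) :
    cancelStep x SSV EA c k SA = Function.update SA k (SA k - cancelAmount x SSV SA EA c k) := by
  funext i
  rcases eq_or_ne i k with rfl | hik
  · simp only [cancelStep, cancelAmount, if_true, Function.update_self]
    split_ifs with hpos
    · rw [max_eq_right (le_min hpos.le hk)]
    · rw [max_eq_left ((min_le_left _ _).trans (not_lt.mp hpos)), sub_zero]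
  · simp only [cancelStep, if_neg hik, Function.update_of_ne hik]

theorem cancelClosedForm_le (PTF LT i : ℕ) : cancelClosedForm x SSV EA c PTF LT SA i ≤ SA i := by
  unfold cancelClosedForm
  split_ifs
  · exact sub_le_self _ (cancelAmount_nonneg i)
  · exact le_rfl

theorem cancelClosedForm_nonneg (hSA : ∀ i, 0 ≤ SA i) (PTF LT i : ℕ) :
    0 ≤ cancelClosedForm x SSV EA c PTF LT SA i := by
  unfold cancelClosedForm
  split_ifs
  · exact sub_nonneg.mpr (cancelAmount_le (hSA i))
  · exact hSA i

theorem cancelStep_cancelClosedForm {m LT : ℕ} (hm : m + 1 ≤ LT) (hSA : 0 ≤ SA (m + 1)) :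
    cancelStep x SSV EA c (m + 1) (cancelClosedForm x SSV EA c (m + 1) LT SA) =
      cancelClosedForm x SSV EA c m LT SA := by
  have hfixed : ∀ i ≤ m + 1, cancelClosedForm x SSV EA c (m + 1) LT SA i = SA i :=
    fun i hi => if_neg (by omega)
  have hamount : cancelAmount x SSV (cancelClosedForm x SSV EA c (m + 1) LT SA) EA c (m + 1) =
      cancelAmount x SSV SA EA c (m + 1) := by
    rw [cancelAmount, cancelAmount, projInv_congr hfixed, hfixed _ le_rfl]
  rw [cancelStep_eq_update (by rwa [hfixed _ le_rfl]), hamount, hfixed _ le_rfl]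
  funext i
  rcases eq_or_ne i (m + 1) with rfl | hi
  · rw [Function.update_self, cancelClosedForm, if_pos ⟨by omega, hm⟩]
  · rw [Function.update_of_ne hi, cancelClosedForm, cancelClosedForm]
    congr 1
    apply propext
    omega

theorem foldl_cancelStep_eq_cancelClosedForm (hSA : ∀ i, 0 ≤ SA i) {LT n : ℕ}
    (hn : n ≤ LT) :
    (List.range n).foldl (fun A j => cancelStep x SSV EA c (LT - j) A) SA =
      cancelClosedForm x SSV EA c (LT - n) LT SA := by
  induction n with
  | zero =>
    funext i
    exact (if_neg (by omega)).symm
  | succ n ih =>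
    have hshift : LT - n = LT - (n + 1) + 1 := by omega
    rw [List.range_succ, List.foldl_append, ih (by omega), List.foldl_cons, List.foldl_nil,
      hshift, cancelStep_cancelClosedForm (by omega) (hSA _)]

theorem backwardCancel_eq_cancelClosedForm (hSA : ∀ i, 0 ≤ SA i) (PTF LT : ℕ) :
    backwardCancel x SSV EA c PTF LT SA = cancelClosedForm x SSV EA c PTF LT SA := by
  rw [backwardCancel, foldl_cancelStep_eq_cancelClosedForm hSA (Nat.sub_le LT PTF)]
  have hbounds : ∀ i, (LT - (LT - PTF) < i ∧ i ≤ LT) ↔ (PTF < i ∧ i ≤ LT) := by omega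
  funext i
  simp only [cancelClosedForm, hbounds]

end

theorem backward_cancellation_closed_form_general
    (PTF LT : ℕ)
    (x SSV : ℝ) (SA EA c : ℕ → ℝ)
    (hSA : ∀ i, 0 ≤ SA i)
    (SA' : ℕ → ℝ) (hSA' : SA' = backwardCancel x SSV EA c PTF LT SA) :
    (∀ k, PTF < k → k ≤ LT →
      SA' k = SA k - max 0 (min (projInv x SA EA c k - SSV) (SA k))) ∧
    (∀ i, i ≤ PTF ∨ LT < i → SA' i = SA i) ∧
    (∀ i, 0 ≤ SA' i ∧ SA' i ≤ SA i) ∧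
    (∀ k, projInv x SA' EA c k ≤ projInv x SA EA c k) := by
  rw [hSA', backwardCancel_eq_cancelClosedForm hSA]
  exact ⟨fun k h1 h2 => if_pos ⟨h1, h2⟩, fun i hi => if_neg (by omega),
    fun i => ⟨cancelClosedForm_nonneg hSA PTF LT i, cancelClosedForm_le PTF LT i⟩,
    projInv_mono (cancelClosedForm_le PTF LT)⟩

/-- the backward order-cancellation loop admits a closed form
independent of its sequential execution: the resulting arrivals are
`SA' k = SA k − max(0, min(C_k − SSV, SA k))` for `PTF < k ≤ LT` (with `C_k`
computed from the original arrivals) and `SA' i = SA i` otherwise; consequently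
`0 ≤ SA' i ≤ SA i` for every `i`, and the projected cumulative inventory after
cancellation is at no day larger than before cancellation. -/
theorem backward_cancellation_closed_form
    (PTF LT : ℕ) (hPL : PTF ≤ LT)
    (x SSV : ℝ) (SA EA c : ℕ → ℝ)
    (hSA : ∀ i, 0 ≤ SA i) (hEA : ∀ i, 0 ≤ EA i) (hc : ∀ i, 0 ≤ c i)
    (SA' : ℕ → ℝ) (hSA' : SA' = backwardCancel x SSV EA c PTF LT SA) :
    (∀ k, PTF < k → k ≤ LT →
      SA' k = SA k - max 0 (min (projInv x SA EA c k - SSV) (SA k))) ∧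
    (∀ i, i ≤ PTF ∨ LT < i → SA' i = SA i) ∧
    (∀ i, 0 ≤ SA' i ∧ SA' i ≤ SA i) ∧
    (∀ k, projInv x SA' EA c k ≤ projInv x SA EA c k) :=
  backward_cancellation_closed_form_general PTF LT x SSV SA EA c hSA SA' hSA'
end
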